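/- Let τ > 0 and A₁ be a bounded operator on a Banach space X. The pure delayed operator exponential exp_τ(A₁ t), defined piecewise as Θ for −τ ≤ t < 0, I at t = 0, and ∑_{l=0}^{n} A₁^{l} (t − lτ)^{l}/l! for nτ < t ≤ (n+1)τ (n ≥ 0), satisfies the delay differential equation d/dt exp_τ(A₁ t) = A₁ exp_τ(A₁ (t − τ)) for all t > 0 with t ∉ τℕ (and one-sidedly at the junction points). -/

import Mathlib

/-! On each interval `(Nτ, (N+1)τ)` the series has only the terms `l ≤ N`, so it coincides near `t`
with a polynomial. Differentiating that polynomial kills the constant term `l = 0` and turns the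
term of index `l + 1` into `A` times the term of index `l` evaluated at `t - τ`; the remaining
`N` terms are exactly the series at `t - τ`, which lies in `((N-1)τ, Nτ)`. -/

open Finset Filter Topology

noncomputable section DelayedExp

variable {𝔸 : Type*} [NormedRing 𝔸] [NormedAlgebra ℝ 𝔸]

def delayedExpTerm (A : 𝔸) (τ : ℝ) (l : ℕ) (s : ℝ) : 𝔸 :=
  ((s - l * τ) ^ l / l.factorial : ℝ) • A ^ l

def delayedExpPoly (A : 𝔸) (τ : ℝ) (N : ℕ) (s : ℝ) : 𝔸 :=
  ∑ l ∈ range N, delayedExpTerm A τ l s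

theorem delayedExpTerm_zero (A : 𝔸) (τ : ℝ) : delayedExpTerm A τ 0 = fun _ => 1 := by
  ext s
  simp [delayedExpTerm]

theorem hasDerivAt_delayedExpTerm_succ (A : 𝔸) (τ : ℝ) (l : ℕ) (s : ℝ) :
    HasDerivAt (delayedExpTerm A τ (l + 1)) (A * delayedExpTerm A τ l (s - τ)) s := by
  have h := (((hasDerivAt_pow (l + 1) _).comp_sub_const s (((l + 1 : ℕ) : ℝ) * τ)).div_const
    ((l + 1).factorial : ℝ)).smul_const (A ^ (l + 1))
  refine h.congr_deriv ?_
  rw [delayedExpTerm, mul_smul_comm, ← pow_succ']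
  congr 1
  push_cast [Nat.factorial_succ]
  field_simp
  ring

theorem hasDerivAt_delayedExpPoly_succ (A : 𝔸) (τ : ℝ) (N : ℕ) (s : ℝ) :
    HasDerivAt (delayedExpPoly A τ (N + 1)) (A * delayedExpPoly A τ N (s - τ)) s := by
  have hsplit : delayedExpPoly A τ (N + 1) =
      fun s => ∑ l ∈ range N, delayedExpTerm A τ (l + 1) s + 1 := by
    ext s
    rw [delayedExpPoly, sum_range_succ', delayedExpTerm_zero]
  rw [hsplit, delayedExpPoly, mul_sum]
  exact (HasDerivAt.fun_sum fun l _ => hasDerivAt_delayedExpTerm_succ A τ l s).add_const 1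

theorem natCast_mul_le_iff_lt {τ s : ℝ} (hτ : 0 < τ) {M : ℕ} (hlo : ((M : ℝ) - 1) * τ ≤ s)
    (hhi : s < M * τ) (l : ℕ) : (l : ℝ) * τ ≤ s ↔ l < M := by
  constructor
  · intro hl
    exact_mod_cast lt_of_mul_lt_mul_right (hl.trans_lt hhi) hτ.le
  · intro hl
    have : (l : ℝ) ≤ M - 1 := by
      rw [le_sub_iff_add_le]
      exact_mod_cast hl
    exact (mul_le_mul_of_nonneg_right this hτ.le).trans hlo

theorem tsum_ite_eq_delayedExpPoly (A : 𝔸) {τ s : ℝ} (hτ : 0 < τ) {M : ℕ}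
    (hlo : ((M : ℝ) - 1) * τ ≤ s) (hhi : s < M * τ) :
    (∑' l : ℕ, if (l : ℝ) * τ ≤ s then ((s - l * τ) ^ l / l.factorial : ℝ) • A ^ l else 0) =
      delayedExpPoly A τ M s := by
  have hiff := natCast_mul_le_iff_lt hτ hlo hhi
  rw [tsum_eq_sum (s := range M) fun l hl => if_neg (by rwa [hiff, ← mem_range])]
  exact sum_congr rfl fun l hl => if_pos ((hiff l).2 (mem_range.1 hl))

end DelayedExp

theorem exists_natCast_mul_lt_lt_succ_mul {τ t : ℝ} (hτ : 0 < τ) (ht : 0 < t)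
    (htn : ∀ n : ℕ, t ≠ n * τ) : ∃ N : ℕ, N * τ < t ∧ t < (N + 1) * τ := by
  refine ⟨⌊t / τ⌋₊, ?_, ?_⟩
  · refine lt_of_le_of_ne ?_ (htn _).symm
    rw [← le_div_iff₀ hτ]
    exact Nat.floor_le (div_pos ht hτ).le
  · rw [← div_lt_iff₀ hτ]
    exact Nat.lt_floor_add_one _

theorem stmt_15_general {X : Type*} [NormedAddCommGroup X] [NormedSpace ℝ X]
    (A₁ : X →L[ℝ] X) (τ : ℝ) (hτ : 0 < τ)
    (E : ℝ → (X →L[ℝ] X))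
    (hE : ∀ t : ℝ, E t = ∑' l : ℕ, if (l : ℝ) * τ ≤ t then
      ((t - l * τ) ^ l / l.factorial : ℝ) • A₁ ^ l else 0) :
    ∀ t : ℝ, 0 < t → (∀ n : ℕ, t ≠ n * τ) →
      HasDerivAt E (A₁ * E (t - τ)) t := by
  intro t ht htn
  obtain ⟨N, hlo, hhi⟩ := exists_natCast_mul_lt_lt_succ_mul hτ ht htn
  have hloc : E =ᶠ[𝓝 t] delayedExpPoly A₁ τ (N + 1) := by
    filter_upwards [Ioo_mem_nhds hlo hhi] with s hs
    rw [hE, tsum_ite_eq_delayedExpPoly A₁ hτ (M := N + 1)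
      (by push_cast; linarith [hs.1]) (by push_cast; exact hs.2)]
  have hshift : E (t - τ) = delayedExpPoly A₁ τ N (t - τ) :=
    (hE _).trans (tsum_ite_eq_delayedExpPoly A₁ hτ (by linarith) (by linarith))
  exact hshift ▸ (hasDerivAt_delayedExpPoly_succ A₁ τ N t).congr_of_eventuallyEq hloc

theorem stmt_15 {X : Type*} [NormedAddCommGroup X] [NormedSpace ℝ X] [CompleteSpace X]
    (A₁ : X →L[ℝ] X) (τ : ℝ) (hτ : 0 < τ)
    (E : ℝ → (X →L[ℝ] X))
    (hE : ∀ t : ℝ, E t = ∑' l : ℕ, if (l : ℝ) * τ ≤ t then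
      ((t - l * τ) ^ l / l.factorial : ℝ) • A₁ ^ l else 0) :
    ∀ t : ℝ, 0 < t → (∀ n : ℕ, t ≠ n * τ) →
      HasDerivAt E (A₁ * E (t - τ)) t :=
  stmt_15_general A₁ τ hτ E hE
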